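/- arXiv:2310.12770 — 2 statements merged into one kernel-verified Lean document; each statement's English description precedes it below -/
import Mathlib

section
/- Let p be a prime. Let A → A' be a formally étale ring homomorphism which is also a map of δ-rings, and let A' → B be a ring homomorphism into a δ-ring B in which p is nilpotent. If the composite A → B is a map of δ-rings, then A' → B is also a map of δ-rings. -/
/-!
A δ-structure on `B` is the same as a ring section `x ↦ (x, δ x)` of the projection
`W₂(B) → B`, where `W₂(B)` is `B × B` with the ring structure of length-two `p`-typical Witt
vectors. Both `x ↦ (g x, δ (g x))` and `x ↦ (g x, g (δ x))` are ring maps `A' → W₂(B)` lifting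
`g`, and they agree on `A` because `A → B` is a map of δ-rings. The kernel of `W₂(B) → B`
consists of the `(0, b)`, and `(0, a) (0, b) = (0, p a b)`, so it is nilpotent once `p` is
nilpotent in `B`; since `A → A'` is formally unramified the two lifts coincide.
-/

universe u

/-- A δ-ring structure on a commutative ring `A`, for the prime `p`. -/
structure DeltaStruct (p : ℕ) (A : Type*) [CommRing A] where
  δ : A → A
  delta_one : δ 1 = 0
  delta_add : ∀ x y : A,
    δ (x + y) = δ x + δ y - ∑ i ∈ Finset.Ioo 0 p, ((p.choose i / p : ℕ) : A) * x ^ i * y ^ (p - i)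
  delta_mul : ∀ x y : A,
    δ (x * y) = x ^ p * δ y + y ^ p * δ x + (p : A) * δ x * δ y

section WittCarry

variable (p : ℕ) {R : Type*} [CommRing R]

/-- `((x + y) ^ p - x ^ p - y ^ p) / p`, written so as to make sense in every ring. -/
def wittCarry (x y : R) : R :=
  ∑ i ∈ Finset.Ioo 0 p, ((p.choose i / p : ℕ) : R) * x ^ i * y ^ (p - i)

theorem wittCarry_zero_left (x : R) : wittCarry p 0 x = 0 :=
  Finset.sum_eq_zero fun i hi => by
    rw [zero_pow (Finset.mem_Ioo.mp hi).1.ne', mul_zero, zero_mul]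

theorem wittCarry_zero_right (x : R) : wittCarry p x 0 = 0 :=
  Finset.sum_eq_zero fun i hi => by
    rw [zero_pow (Nat.sub_ne_zero_of_lt (Finset.mem_Ioo.mp hi).2), mul_zero]

theorem wittCarry_comm (x y : R) : wittCarry p x y = wittCarry p y x := by
  refine Finset.sum_nbij' (p - ·) (p - ·) ?_ ?_ ?_ ?_ ?_ <;>
    intro i hi <;> simp only [Finset.mem_Ioo] at hi ⊢
  · omega
  · omega
  · omega
  · omega
  · rw [Nat.choose_symm hi.2.le, Nat.sub_sub_self hi.2.le]
    ring

theorem map_wittCarry {S F : Type*} [CommRing S] [FunLike F R S] [RingHomClass F R S] (f : F)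
    (x y : R) : f (wittCarry p x y) = wittCarry p (f x) (f y) := by
  simp only [wittCarry, map_sum, map_mul, map_pow, map_natCast]

theorem wittCarry_mul_mul_left (x y z : R) :
    wittCarry p (x * y) (x * z) = x ^ p * wittCarry p y z := by
  rw [wittCarry, wittCarry, Finset.mul_sum]
  refine Finset.sum_congr rfl fun i hi => ?_
  rw [← Nat.add_sub_cancel' (Finset.mem_Ioo.mp hi).2.le]
  simp only [Nat.add_sub_cancel_left]
  ring

variable {p}

theorem natCast_mul_wittCarry (hp : p.Prime) (x y : R) :
    (p : R) * wittCarry p x y = (x + y) ^ p - x ^ p - y ^ p := by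
  have hrange : Finset.range (p + 1) = insert 0 (insert p (Finset.Ioo 0 p)) := by
    ext i
    simp only [Finset.mem_range, Finset.mem_insert, Finset.mem_Ioo]
    omega
  have hterm : ∀ i ∈ Finset.Ioo 0 p, x ^ i * y ^ (p - i) * (p.choose i : R) =
      (p : R) * (((p.choose i / p : ℕ) : R) * x ^ i * y ^ (p - i)) := fun i hi => by
    obtain ⟨hi0, hip⟩ := Finset.mem_Ioo.mp hi
    obtain ⟨c, hc⟩ := hp.dvd_choose_self hi0.ne' hip
    rw [hc, Nat.mul_div_cancel_left c hp.pos]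
    push_cast
    ring
  rw [add_pow, hrange, Finset.sum_insert (by simp [hp.ne_zero.symm]), Finset.sum_insert (by simp),
    Finset.sum_congr rfl hterm, ← Finset.mul_sum, wittCarry]
  simp only [pow_zero, Nat.sub_zero, Nat.choose_zero_right, Nat.sub_self, Nat.choose_self]
  push_cast
  ring

/-- It suffices to check this in `ℤ[X₀, X₁, X₂]`, where `p` is a non-zero-divisor. -/
theorem wittCarry_add_wittCarry_add (hp : p.Prime) (x y z : R) :
    wittCarry p x y + wittCarry p (x + y) z = wittCarry p y z + wittCarry p x (y + z) := by
  let X : Fin 3 → MvPolynomial (Fin 3) ℤ := MvPolynomial.X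
  have universal : wittCarry p (X 0) (X 1) + wittCarry p (X 0 + X 1) (X 2) =
      wittCarry p (X 1) (X 2) + wittCarry p (X 0) (X 1 + X 2) := by
    apply mul_left_cancel₀ (Nat.cast_ne_zero.mpr hp.ne_zero : (p : MvPolynomial (Fin 3) ℤ) ≠ 0)
    rw [mul_add, mul_add, natCast_mul_wittCarry hp, natCast_mul_wittCarry hp,
      natCast_mul_wittCarry hp, natCast_mul_wittCarry hp]
    ring
  simpa [X, map_wittCarry] using congrArg (MvPolynomial.aeval (R := ℤ) ![x, y, z]) universal

end WittCarry

/-- Length-two `p`-typical Witt vectors, in the coordinates `(x, δ x)` rather than the usual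
`(x₀, x₁)`; the ring structure is the one for which `x ↦ (x, δ x)` is a ring map. -/
@[ext]
structure W2 (p : ℕ) (B : Type*) where
  fst : B
  snd : B

namespace W2

variable {p : ℕ} {B : Type*} [CommRing B]

instance : Add (W2 p B) := ⟨fun a b => ⟨a.fst + b.fst, a.snd + b.snd - wittCarry p a.fst b.fst⟩⟩
instance : Mul (W2 p B) :=
  ⟨fun a b => ⟨a.fst * b.fst, a.fst ^ p * b.snd + b.fst ^ p * a.snd + (p : B) * a.snd * b.snd⟩⟩
instance : Neg (W2 p B) := ⟨fun a => ⟨-a.fst, -a.snd + wittCarry p a.fst (-a.fst)⟩⟩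
instance : Zero (W2 p B) := ⟨⟨0, 0⟩⟩
instance : One (W2 p B) := ⟨⟨1, 0⟩⟩

@[simp] theorem add_fst (a b : W2 p B) : (a + b).fst = a.fst + b.fst := rfl
@[simp] theorem add_snd (a b : W2 p B) :
    (a + b).snd = a.snd + b.snd - wittCarry p a.fst b.fst := rfl
@[simp] theorem mul_fst (a b : W2 p B) : (a * b).fst = a.fst * b.fst := rfl
@[simp] theorem mul_snd (a b : W2 p B) :
    (a * b).snd = a.fst ^ p * b.snd + b.fst ^ p * a.snd + (p : B) * a.snd * b.snd := rfl
@[simp] theorem neg_fst (a : W2 p B) : (-a).fst = -a.fst := rfl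
@[simp] theorem neg_snd (a : W2 p B) : (-a).snd = -a.snd + wittCarry p a.fst (-a.fst) := rfl
@[simp] theorem zero_fst : (0 : W2 p B).fst = 0 := rfl
@[simp] theorem zero_snd : (0 : W2 p B).snd = 0 := rfl
@[simp] theorem one_fst : (1 : W2 p B).fst = 1 := rfl
@[simp] theorem one_snd : (1 : W2 p B).snd = 0 := rfl

protected theorem mul_comm (a b : W2 p B) : a * b = b * a := by
  ext <;> simp only [mul_fst, mul_snd] <;> ring

variable [hp : Fact p.Prime]

theorem add_mul_snd (a b c : W2 p B) : ((a + b) * c).snd = (a * c + b * c).snd := by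
  have hpow := natCast_mul_wittCarry hp.out a.fst b.fst
  have hcarry := wittCarry_mul_mul_left p c.fst a.fst b.fst
  simp only [mul_fst, mul_snd, add_fst, add_snd, mul_comm _ c.fst] at hcarry ⊢
  linear_combination -hpow * c.snd + hcarry

instance : CommRing (W2 p B) where
  add_assoc a b c := by
    ext
    · exact add_assoc _ _ _
    · simp only [add_fst, add_snd]
      linear_combination -wittCarry_add_wittCarry_add hp.out a.fst b.fst c.fst
  zero_add a := by ext <;> simp [wittCarry_zero_left]
  add_zero a := by ext <;> simp [wittCarry_zero_right]
  add_comm a b := by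
    ext
    · exact add_comm _ _
    · simp only [add_snd, wittCarry_comm p a.fst]
      ring
  neg_add_cancel a := by
    ext
    · exact neg_add_cancel _
    · simp only [add_snd, neg_fst, neg_snd, zero_snd, wittCarry_comm p a.fst]
      ring
  mul_assoc a b c := by ext <;> simp only [mul_fst, mul_snd] <;> ring
  one_mul a := by ext <;> simp
  mul_one a := by ext <;> simp
  mul_comm := W2.mul_comm
  right_distrib a b c := by
    ext
    · exact add_mul _ _ _
    · exact add_mul_snd a b c
  left_distrib a b c := by
    ext
    · exact mul_add _ _ _
    · simpa only [W2.mul_comm a] using add_mul_snd b c a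
  zero_mul a := by ext <;> simp [zero_pow hp.out.ne_zero]
  mul_zero a := by ext <;> simp [zero_pow hp.out.ne_zero]
  nsmul := nsmulRec
  zsmul := zsmulRec

variable (p B) in
def fstHom : W2 p B →+* B where
  toFun := fst
  map_one' := rfl
  map_mul' _ _ := rfl
  map_zero' := rfl
  map_add' _ _ := rfl

def map {C : Type*} [CommRing C] (g : B →+* C) : W2 p B →+* W2 p C where
  toFun x := ⟨g x.fst, g x.snd⟩
  map_one' := by ext <;> simp
  map_mul' a b := by ext <;> simp
  map_zero' := by ext <;> simp
  map_add' a b := by ext <;> simp [map_wittCarry]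

variable (p B) in
/-- The ideal `V(p ^ n B)` of the elements `(0, p ^ n b)`. -/
def verIdeal (n : ℕ) : Ideal (W2 p B) where
  carrier := {x | x.fst = 0 ∧ (p : B) ^ n ∣ x.snd}
  add_mem' := by
    rintro a b ⟨ha, c, hc⟩ ⟨hb, d, hd⟩
    exact ⟨by simp [ha, hb], c + d, by simp [ha, hc, hd, wittCarry_zero_left, mul_add]⟩
  zero_mem' := ⟨rfl, dvd_zero _⟩
  smul_mem' := by
    rintro r x ⟨hx, c, hc⟩
    refine ⟨by simp [hx], r.fst ^ p * c + p * r.snd * c, ?_⟩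
    rw [smul_eq_mul, mul_snd, hx, hc, zero_pow hp.out.ne_zero]
    ring

theorem ker_fstHom_pow_le_verIdeal (n : ℕ) :
    RingHom.ker (fstHom p B) ^ (n + 1) ≤ verIdeal p B n := by
  induction n with
  | zero => exact fun x hx => ⟨by rwa [zero_add, pow_one] at hx, by simp⟩
  | succ n ih =>
    rw [pow_succ, Ideal.mul_le]
    rintro r hr s (hs : s.fst = 0)
    obtain ⟨hr, c, hc⟩ := ih hr
    refine ⟨by simp [hr], c * s.snd, ?_⟩
    simp only [mul_snd, hr, hs, hc, zero_pow hp.out.ne_zero, zero_mul, zero_add]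
    ring

theorem isNilpotent_ker_fstHom (hpB : IsNilpotent (p : B)) :
    IsNilpotent (RingHom.ker (fstHom p B)) := by
  obtain ⟨n, hn⟩ := hpB
  refine ⟨n + 1, eq_bot_iff.mpr <| (ker_fstHom_pow_le_verIdeal n).trans ?_⟩
  rintro x ⟨hx, c, hc⟩
  rw [hn, zero_mul] at hc
  exact (Submodule.mem_bot _).mpr (W2.ext hx hc)

end W2

namespace DeltaStruct

variable {p : ℕ} {B : Type*} [CommRing B] (d : DeltaStruct p B)

theorem delta_add_eq (x y : B) : d.δ (x + y) = d.δ x + d.δ y - wittCarry p x y :=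
  d.delta_add x y

theorem delta_zero : d.δ 0 = 0 := by
  simpa [wittCarry_zero_left] using d.delta_add_eq 0 0

def toW2 [Fact p.Prime] : B →+* W2 p B where
  toFun x := ⟨x, d.δ x⟩
  map_one' := by ext <;> simp [d.delta_one]
  map_mul' x y := by ext <;> simp [d.delta_mul]
  map_zero' := by ext <;> simp [d.delta_zero]
  map_add' x y := by ext <;> simp [d.delta_add_eq]

theorem map_delta_of_formallyUnramified [Fact p.Prime] {A A' : Type*} [CommRing A] [CommRing A']
    [Algebra A A'] [Algebra.FormallyUnramified A A'] (dA' : DeltaStruct p A') (g : A' →+* B)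
    (hpB : IsNilpotent (p : B))
    (hA : ∀ a : A, d.δ (g (algebraMap A A' a)) = g (dA'.δ (algebraMap A A' a))) (x : A') :
    d.δ (g x) = g (dA'.δ x) := by
  let u : A' →+* W2 p B := d.toW2.comp g
  let v : A' →+* W2 p B := (W2.map g).comp dA'.toW2
  let : Algebra A (W2 p B) := (u.comp (algebraMap A A')).toAlgebra
  let uA : A' →ₐ[A] W2 p B := { u with commutes' := fun _ => rfl }
  let vA : A' →ₐ[A] W2 p B :=
    { v with commutes' := fun a => W2.ext rfl (hA a).symm }
  have huv : uA = vA :=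
    Algebra.FormallyUnramified.ext' _ (W2.isNilpotent_ker_fstHom hpB) uA vA fun _ => rfl
  exact congrArg (fun w : A' →ₐ[A] W2 p B => (w x).snd) huv

end DeltaStruct

/-- If `A → A'` is a formally étale ring map which is a map of δ-rings, `A' → B` is a ring map
into a δ-ring `B` in which `p` is nilpotent, and the composite `A → B` is a map of δ-rings,
then `A' → B` is a map of δ-rings. -/
theorem stmt0 (p : ℕ) (hp : p.Prime) {A A' B : Type u} [CommRing A] [CommRing A'] [CommRing B]
    (dA : DeltaStruct p A) (dA' : DeltaStruct p A') (dB : DeltaStruct p B)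
    (f : A →+* A') (g : A' →+* B)
    (hetale : @Algebra.FormallyEtale A A' _ _ f.toAlgebra)
    (hf : ∀ a : A, dA'.δ (f a) = f (dA.δ a))
    (hpnil : IsNilpotent (p : B))
    (hgf : ∀ a : A, dB.δ (g (f a)) = g (f (dA.δ a))) :
    ∀ a : A', dB.δ (g a) = g (dA'.δ a) := by
  have : Fact p.Prime := ⟨hp⟩
  let : Algebra A A' := f.toAlgebra
  exact dB.map_delta_of_formallyUnramified dA' g hpnil fun a =>
    (hgf a).trans (congrArg g (hf a)).symm
end

section
/- Let p be a prime and A a commutative ring with δ-structure δ, and let A = F⁰ ⊇ F¹ ⊇ ⋯ be a descending multiplicative filtration by additive subgroups (Fⁱ·Fʲ ⊆ F^{i+j}) such that each graded piece Fᵏ/F^{k+1} is p-torsion free. If the associated Frobenius lift φ(x) = x^p + p·δ(x) satisfies φ(Fᵐ) ⊆ F^{pm} for all m ≥ 0, then δ(Fᵐ) ⊆ F^{pm} for all m ≥ 0. -/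
/-- For a δ-ring `A` with a descending multiplicative filtration `F` whose graded pieces
are `p`-torsion free: if the Frobenius lift `φ(x) = x^p + p·δ(x)` satisfies
`φ(Fᵐ) ⊆ F^{pm}` for all `m ≥ 0`, then `δ(Fᵐ) ⊆ F^{pm}` for all `m ≥ 0`. -/
theorem stmt7 (p : ℕ) (hp : p.Prime) {A : Type*} [CommRing A] (d : DeltaStruct p A)
    (F : ℕ → AddSubgroup A) (h0 : F 0 = ⊤) (hanti : ∀ k, F (k + 1) ≤ F k)
    (hmul : ∀ i j : ℕ, ∀ x ∈ F i, ∀ y ∈ F j, x * y ∈ F (i + j))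
    (htf : ∀ k, ∀ x ∈ F k, p • x ∈ F (k + 1) → x ∈ F (k + 1))
    (hφ : ∀ m : ℕ, ∀ x ∈ F m, x ^ p + (p : A) * d.δ x ∈ F (p * m)) :
    ∀ m : ℕ, ∀ x ∈ F m, d.δ x ∈ F (p * m) := by
  intro m x hx
  -- x^n ∈ F (n*m)
  have hpow : ∀ n : ℕ, x ^ n ∈ F (n * m) := by
    intro n
    induction n with
    | zero => simp [h0]
    | succ n ih =>
      have := hmul (n * m) m (x ^ n) ih x hx
      rw [pow_succ]
      rwa [show (n + 1) * m = n * m + m by ring]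
  have hpd : (p : A) * d.δ x ∈ F (p * m) := by
    have h1 := hφ m x hx
    have h2 := hpow p
    have : (p : A) * d.δ x = (x ^ p + (p : A) * d.δ x) - x ^ p := by ring
    rw [this]
    exact sub_mem h1 h2
  -- climb: ∀ n, p•y ∈ F n → y ∈ F n (y ∈ F 0 always)
  have climb : ∀ n : ℕ, ∀ y : A, p • y ∈ F n → y ∈ F n := by
    intro n
    induction n with
    | zero => intro y _; simp [h0]
    | succ n ih =>
      intro y hy
      exact htf n y (ih y (hanti n hy)) hy
  have : p • d.δ x ∈ F (p * m) := by
    rwa [nsmul_eq_mul]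
  exact climb _ _ this
end
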